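/- Let G be a finite simple graph with N10 ≥ 1 four-cliques, and let k10 be the maximum number of 4-cliques of G sharing a common edge. Fix reals 0 < p ≤ 1 and ε > 0, and let Y10 be the number of 4-cliques of the random subgraph G̃ obtained by retaining each edge of G independently with probability p. Then P( |Y10 − p^6 · N10| ≥ ε · N10 ) ≤ 2 · exp( −2 ε² N10 / k10 ). -/

import Mathlib

/-!
`Y10 - p ^ 6 * N10` is the sum over the 4-cliques `Q` of the centred indicators `X_Q - p ^ 6` that
all six edges of `Q` survive. Each `X_Q` is Bernoulli(`p ^ 6`), so Hoeffding's lemma gives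
`E exp (t (X_Q - p ^ 6)) ≤ exp (t ^ 2 / 8)`. The `X_Q` are dependent, but `X_Q` is a function of
the edges of `Q` only and every edge lies in at most `k10` cliques, so Finner's inequality (a
Hölder inequality for product measures) bounds `E ∏_Q exp (s (X_Q - p ^ 6))` by
`∏_Q (E exp (k10 s (X_Q - p ^ 6))) ^ (1 / k10) ≤ exp (k10 N10 s ^ 2 / 8)`, and Chernoff's bound
on both tails concludes. Finner's inequality is proved by integrating out one edge at a time;
each step is a Hölder inequality over the two states of that edge, with at most `k10` factors.
-/

open Finset

namespace FourProfileSparsifier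

variable {V : Type*} [Fintype V] [DecidableEq V]

/-- The random subgraph of `G` keeping exactly those edges `e` with `ω e = true`. -/
def keep (G : SimpleGraph V) [DecidableRel G.Adj] (ω : G.edgeFinset → Bool) :
    SimpleGraph V where
  Adj a b := ∃ h : G.Adj a b, ω ⟨s(a, b), SimpleGraph.mem_edgeFinset.mpr h⟩ = true
  symm := by
    constructor
    rintro a b ⟨h, hw⟩
    refine ⟨h.symm, ?_⟩
    have key : (⟨s(b, a), SimpleGraph.mem_edgeFinset.mpr h.symm⟩ : G.edgeFinset) =
        ⟨s(a, b), SimpleGraph.mem_edgeFinset.mpr h⟩ := Subtype.ext (Sym2.eq_swap)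
    rw [key, hw]
  loopless := by constructor; rintro a ⟨h, -⟩; exact G.irrefl h

instance (G : SimpleGraph V) [DecidableRel G.Adj] (ω : G.edgeFinset → Bool) :
    DecidableRel (keep G ω).Adj := fun _ _ => exists_prop_decidable _

/-- `N10`: the number of 4-cliques of `G`. -/
def N10 (G : SimpleGraph V) [DecidableRel G.Adj] : ℕ := (G.cliqueFinset 4).card

/-- `k10`: the maximum number of 4-cliques of `G` sharing a common edge. -/
def k10 (G : SimpleGraph V) [DecidableRel G.Adj] : ℕ :=
  Finset.univ.sup fun x : V × V =>
    if G.Adj x.1 x.2 then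
      ((G.cliqueFinset 4).filter fun s => x.1 ∈ s ∧ x.2 ∈ s).card
    else 0

/-- `Y10 ω`: the number of 4-cliques of the sparsified graph. -/
def Y10 (G : SimpleGraph V) [DecidableRel G.Adj] (ω : G.edgeFinset → Bool) : ℕ :=
  ((keep G ω).cliqueFinset 4).card

open Classical in
/-- The probability of the event `A` under independent Bernoulli(`p`) retention of each
edge of `G`: the sample space is the set of functions `ω : E → Bool` equipped with the
product of Bernoulli(`p`) measures. -/
noncomputable def prob (G : SimpleGraph V) [DecidableRel G.Adj] (p : ℝ)
    (A : (G.edgeFinset → Bool) → Prop) : ℝ :=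
  ∑ ω : G.edgeFinset → Bool,
    if A ω then ∏ e : G.edgeFinset, (if ω e then p else 1 - p) else 0

end FourProfileSparsifier

open Function

lemma prod_le_one_sub_card_div_add_sum_pow_div {α : Type*} {k : ℕ} (hk : 0 < k) (F : Finset α)
    (hF : #F ≤ k) (z : α → ℝ) (hz : ∀ a ∈ F, 0 ≤ z a) :
    ∏ a ∈ F, z a ≤ (1 - #F / k) + (∑ a ∈ F, z a ^ k) / k := by
  have hkR : (0 : ℝ) < k := by exact_mod_cast hk
  -- weighted AM-GM for the `k`-th powers, with weight `1 / k` each, padded by the value `1`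
  have key := Real.geom_mean_le_arith_mean_weighted (insertNone F)
    (fun o => o.elim (1 - #F / k) fun _ => (k : ℝ)⁻¹) (fun o => o.elim 1 fun a => z a ^ k)
    (fun o _ => by
      cases o with
      | none => simpa [sub_nonneg, div_le_one hkR] using hF
      | some a => simp only [Option.elim]; positivity)
    (by
      simp only [sum_insertNone, Option.elim_none, Option.elim_some, sum_const, nsmul_eq_mul]
      field_simp
      ring)
    (fun o ho => by
      cases o with
      | none => exact zero_le_one
      | some a => exact pow_nonneg (hz a (by simpa using ho)) k)
  simp only [prod_insertNone, sum_insertNone, Option.elim, Real.one_rpow, one_mul, mul_one] at key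
  calc ∏ a ∈ F, z a = ∏ a ∈ F, (z a ^ k) ^ (k⁻¹ : ℝ) :=
        prod_congr rfl fun a ha => (Real.pow_rpow_inv_natCast (hz a ha) hk.ne').symm
    _ ≤ _ := key
    _ = _ := by rw [sum_div]; simp only [div_eq_inv_mul]

lemma sum_mul_prod_div_le_one {β κ : Type*} [Fintype β] {p : β → ℝ} (hp0 : ∀ b, 0 ≤ p b)
    (hp1 : ∑ b, p b = 1) {k : ℕ} (hk : 0 < k) (F : Finset κ) (hF : #F ≤ k) (x : κ → β → ℝ)
    (hx : ∀ a ∈ F, ∀ b, 0 ≤ x a b) (n : κ → ℝ) (hn : ∀ a ∈ F, 0 < n a)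
    (hnk : ∀ a ∈ F, n a ^ k = ∑ b, p b * x a b ^ k) :
    ∑ b, p b * ∏ a ∈ F, (x a b / n a) ≤ 1 := by
  have hkR : (0 : ℝ) < k := by exact_mod_cast hk
  have hnormalized : ∑ b, p b * ∑ a ∈ F, (x a b / n a) ^ k = #F := by
    simp only [mul_sum, div_pow]
    rw [sum_comm, cast_card]
    refine sum_congr rfl fun a ha => ?_
    simp only [← mul_div_assoc, ← sum_div, ← hnk a ha]
    exact div_self (pow_pos (hn a ha) k).ne'
  calc ∑ b, p b * ∏ a ∈ F, (x a b / n a)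
      ≤ ∑ b, p b * ((1 - #F / k) + (∑ a ∈ F, (x a b / n a) ^ k) / k) :=
        sum_le_sum fun b _ => mul_le_mul_of_nonneg_left
          (prod_le_one_sub_card_div_add_sum_pow_div hk F hF _
            fun a ha => div_nonneg (hx a ha b) (hn a ha).le) (hp0 b)
    _ = 1 := by
        simp only [mul_add, mul_div_assoc', sum_add_distrib, ← sum_div, ← sum_mul, hp1,
          hnormalized]
        field_simp
        ring

theorem sum_mul_prod_le_prod_rpow_sum_mul_pow {β κ : Type*} [Fintype β] {p : β → ℝ}
    (hp0 : ∀ b, 0 ≤ p b) (hp1 : ∑ b, p b = 1) {k : ℕ} (hk : 0 < k) (F : Finset κ) (hF : #F ≤ k)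
    (x : κ → β → ℝ) (hx : ∀ a ∈ F, ∀ b, 0 ≤ x a b) :
    ∑ b, p b * ∏ a ∈ F, x a b ≤ ∏ a ∈ F, (∑ b, p b * x a b ^ k) ^ (k⁻¹ : ℝ) := by
  set n : κ → ℝ := fun a => (∑ b, p b * x a b ^ k) ^ (k⁻¹ : ℝ)
  have hmoment0 : ∀ a ∈ F, 0 ≤ ∑ b, p b * x a b ^ k := fun a ha =>
    sum_nonneg fun b _ => mul_nonneg (hp0 b) (pow_nonneg (hx a ha b) k)
  have hn0 : ∀ a ∈ F, 0 ≤ n a := fun a ha => Real.rpow_nonneg (hmoment0 a ha) _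
  have hnk : ∀ a ∈ F, n a ^ k = ∑ b, p b * x a b ^ k := fun a ha =>
    Real.rpow_inv_natCast_pow (hmoment0 a ha) hk.ne'
  by_cases hzero : ∃ a ∈ F, n a = 0
  · obtain ⟨a₀, ha₀, hna₀⟩ := hzero
    have hterm : ∀ b, p b * x a₀ b ^ k = 0 := fun b =>
      (sum_eq_zero_iff_of_nonneg fun b _ => mul_nonneg (hp0 b) (pow_nonneg (hx a₀ ha₀ b) k)).1
        (by rw [← hnk a₀ ha₀, hna₀, zero_pow hk.ne']) b (mem_univ b)
    have hlhs : ∑ b, p b * ∏ a ∈ F, x a b = 0 := sum_eq_zero fun b _ => by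
      rcases mul_eq_zero.1 (hterm b) with h | h
      · rw [h, zero_mul]
      · rw [prod_eq_zero ha₀ (pow_eq_zero_iff hk.ne' |>.1 h), mul_zero]
    exact hlhs ▸ prod_nonneg hn0
  push Not at hzero
  have hnpos : ∀ a ∈ F, 0 < n a := fun a ha => (hn0 a ha).lt_of_ne' (hzero a ha)
  calc ∑ b, p b * ∏ a ∈ F, x a b
      = (∏ a ∈ F, n a) * ∑ b, p b * ∏ a ∈ F, (x a b / n a) := by
        rw [mul_sum]
        refine sum_congr rfl fun b _ => ?_
        rw [prod_div_distrib]
        field_simp [(prod_pos hnpos).ne']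
    _ ≤ ∏ a ∈ F, n a :=
        mul_le_of_le_one_right (prod_nonneg hn0)
          (sum_mul_prod_div_le_one hp0 hp1 hk F hF x hx n hnpos hnk)

open MeasureTheory ProbabilityTheory in
lemma bernoulli_centered_mgf_le {θ : ℝ} (h0 : 0 ≤ θ) (h1 : θ ≤ 1) (t : ℝ) :
    (1 - θ) * Real.exp (-(t * θ)) + θ * Real.exp (t * (1 - θ)) ≤ Real.exp (t ^ 2 / 8) := by
  let μ : Measure Bool := bernoulliMeasure true false ⟨θ, h0, h1⟩
  let X : Bool → ℝ := fun b => if b then 1 else 0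
  have hX : HasSubgaussianMGF (fun b => X b - μ[X]) ((‖(1 : ℝ) - 0‖₊ / 2) ^ 2) μ :=
    hasSubgaussianMGF_of_mem_Icc (by fun_prop) (.of_forall fun b => by cases b <;> simp [X])
  have hmean : μ[X] = θ := by simp [μ, X, integral_bernoulliMeasure]
  have := hX.mgf_le t
  simp only [mgf, hmean, μ, integral_bernoulliMeasure, X] at this
  norm_num at this
  rw [add_comm]
  convert this using 2
  ring

lemma indicator_le_exp_add_exp {s t d : ℝ} (hs : 0 ≤ s) :
    (if t ≤ |d| then 1 else 0 : ℝ) ≤ Real.exp (s * (d - t)) + Real.exp (s * (-d - t)) := by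
  have h1 := Real.exp_pos (s * (d - t))
  have h2 := Real.exp_pos (s * (-d - t))
  split_ifs with h
  · rcases le_abs.1 h with h | h <;>
      linarith [Real.one_le_exp (mul_nonneg hs (sub_nonneg.2 h))]
  · positivity

namespace BoolCube

variable {ι : Type*} [DecidableEq ι] {w : ι → Bool → ℝ}

noncomputable def coordNorm (w : ι → Bool → ℝ) (k : ℕ) (e : ι) (h : (ι → Bool) → ℝ)
    (ω : ι → Bool) : ℝ :=
  (∑ b, w e b * h (update ω e b) ^ k) ^ (k⁻¹ : ℝ)

lemma coordNorm_nonneg (hw0 : ∀ i b, 0 ≤ w i b) {k : ℕ} (e : ι) {h : (ι → Bool) → ℝ}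
    (hh : ∀ ω, 0 ≤ h ω) (ω : ι → Bool) : 0 ≤ coordNorm w k e h ω :=
  Real.rpow_nonneg (sum_nonneg fun b _ => mul_nonneg (hw0 e b) (pow_nonneg (hh _) k)) _

lemma _root_.DependsOn.coordNorm {h : (ι → Bool) → ℝ} {s : Set ι} (hs : DependsOn h s) (k : ℕ)
    (e : ι) : DependsOn (coordNorm w k e h) (s \ {e}) := by
  intro ω ω' hωω'
  refine congrArg (· ^ (k⁻¹ : ℝ)) (sum_congr rfl fun b _ => ?_)
  rw [hs fun i hi => ?_]
  by_cases hie : i = e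
  · simp [hie]
  · simp only [update_of_ne hie, hωω' i ⟨hi, hie⟩]

lemma sum_mul_prod_update_le_prod_coordNorm (hw0 : ∀ i b, 0 ≤ w i b)
    (hw1 : ∀ i, ∑ b, w i b = 1) {k : ℕ} (hk : 0 < k) {κ : Type*} (A : Finset κ)
    (S : κ → Finset ι) (g : κ → (ι → Bool) → ℝ) (hg0 : ∀ a ∈ A, ∀ ω, 0 ≤ g a ω)
    (hgS : ∀ a ∈ A, DependsOn (g a) (S a)) (e : ι) (he : #{a ∈ A | e ∈ S a} ≤ k)
    (ω : ι → Bool) :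
    ∑ b, w e b * ∏ a ∈ A, g a (update ω e b) ≤
      ∏ a ∈ A, if e ∈ S a then coordNorm w k e (g a) ω else g a ω := by
  have hsplit : ∀ b, ∏ a ∈ A, g a (update ω e b) =
      (∏ a ∈ A with e ∈ S a, g a (update ω e b)) * ∏ a ∈ A with e ∉ S a, g a ω := fun b => by
    rw [← prod_filter_mul_prod_filter_not A fun a => e ∈ S a]
    congr 1
    refine prod_congr rfl fun a ha => ?_
    obtain ⟨ha, hea⟩ := mem_filter.1 ha
    exact hgS a ha fun i hi => update_of_ne (ne_of_mem_of_not_mem hi hea) _ _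
  have hholder := sum_mul_prod_le_prod_rpow_sum_mul_pow (hw0 e) (hw1 e) hk _ he
    (fun a b => g a (update ω e b)) fun a ha b => hg0 a (mem_filter.1 ha).1 _
  simp only [hsplit, ← mul_assoc, ← sum_mul, prod_ite]
  exact mul_le_mul_of_nonneg_right hholder
    (prod_nonneg fun a ha => hg0 a (mem_filter.1 ha).1 ω)

variable [Fintype ι]

def expectation (w : ι → Bool → ℝ) (f : (ι → Bool) → ℝ) : ℝ :=
  ∑ ω, (∏ i, w i (ω i)) * f ω

lemma expectation_nonneg (hw0 : ∀ i b, 0 ≤ w i b) {f : (ι → Bool) → ℝ} (hf : ∀ ω, 0 ≤ f ω) :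
    0 ≤ expectation w f :=
  sum_nonneg fun ω _ => mul_nonneg (prod_nonneg fun i _ => hw0 i (ω i)) (hf ω)

lemma expectation_mono (hw0 : ∀ i b, 0 ≤ w i b) {f g : (ι → Bool) → ℝ} (h : ∀ ω, f ω ≤ g ω) :
    expectation w f ≤ expectation w g :=
  sum_le_sum fun ω _ => mul_le_mul_of_nonneg_left (h ω) (prod_nonneg fun i _ => hw0 i (ω i))

lemma expectation_add (f g : (ι → Bool) → ℝ) :
    expectation w (fun ω => f ω + g ω) = expectation w f + expectation w g := by
  simp only [expectation, mul_add, sum_add_distrib]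

lemma expectation_const_mul (c : ℝ) (f : (ι → Bool) → ℝ) :
    expectation w (fun ω => c * f ω) = c * expectation w f := by
  simp only [expectation, mul_sum, mul_left_comm]

lemma expectation_prod (hw1 : ∀ i, ∑ b, w i b = 1) (s : Finset ι) (f : ι → Bool → ℝ) :
    expectation w (fun ω => ∏ i ∈ s, f i (ω i)) = ∏ i ∈ s, ∑ b, w i b * f i b := by
  have hfactor : ∀ ω : ι → Bool, (∏ i, w i (ω i)) * ∏ i ∈ s, f i (ω i) =
      ∏ i, w i (ω i) * (if i ∈ s then f i (ω i) else 1) := fun ω => by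
    rw [prod_mul_distrib, Fintype.prod_ite_mem]
  simp only [expectation, hfactor]
  rw [← Fintype.prod_sum fun i b => w i b * if i ∈ s then f i b else 1,
    ← Fintype.prod_ite_mem s fun i => ∑ b, w i b * f i b]
  refine Fintype.prod_congr _ _ fun i => ?_
  split_ifs <;> simp only [mul_one, hw1]

lemma expectation_const (hw1 : ∀ i, ∑ b, w i b = 1) (c : ℝ) : expectation w (fun _ => c) = c := by
  rw [expectation, ← sum_mul, ← Fintype.prod_sum w]
  simp only [hw1, prod_const_one, one_mul]

lemma expectation_eq_expectation_sum_update (hw1 : ∀ i, ∑ b, w i b = 1) (e : ι)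
    (f : (ι → Bool) → ℝ) :
    expectation w f = expectation w (fun ω => ∑ b, w e b * f (update ω e b)) := by
  have hτ : Involutive fun x : (ι → Bool) × Bool => (update x.1 e x.2, x.1 e) :=
    fun x => by simp
  have hweight : ∀ ω c, (∏ i, w i (update ω e c i)) * w e (ω e) = w e c * ∏ i, w i (ω i) := by
    intro ω c
    rw [prod_eq_mul_prod_sdiff_singleton_of_mem (mem_univ e) fun i => w i (ω i)]
    simp only [apply_update (fun i => w i), prod_update_of_mem (mem_univ e)]
    ring
  calc expectation w f = ∑ x : (ι → Bool) × Bool, w e x.2 * ((∏ i, w i (x.1 i)) * f x.1) := by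
        rw [Fintype.sum_prod_type_right, expectation]
        simp only [← mul_sum]
        rw [← sum_mul, hw1, one_mul]
    _ = ∑ x : (ι → Bool) × Bool, (∏ i, w i (x.1 i)) * (w e x.2 * f (update x.1 e x.2)) := by
        rw [← Equiv.sum_comp (hτ.toPerm _)]
        refine Fintype.sum_congr _ _ fun x => ?_
        simp only [Involutive.coe_toPerm]
        linear_combination f (update x.1 e x.2) * hweight x.1 x.2
    _ = _ := by
        rw [Fintype.sum_prod_type, expectation]
        simp only [mul_sum]

lemma expectation_coordNorm_pow (hw0 : ∀ i b, 0 ≤ w i b) (hw1 : ∀ i, ∑ b, w i b = 1) {k : ℕ}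
    (hk : 0 < k) (e : ι) {h : (ι → Bool) → ℝ} (hh : ∀ ω, 0 ≤ h ω) :
    expectation w (fun ω => coordNorm w k e h ω ^ k) = expectation w (fun ω => h ω ^ k) := by
  rw [expectation_eq_expectation_sum_update hw1 e fun ω => h ω ^ k]
  congr 1 with ω
  exact Real.rpow_inv_natCast_pow
    (sum_nonneg fun b _ => mul_nonneg (hw0 e b) (pow_nonneg (hh _) k)) hk.ne'

lemma expectation_prod_eq_of_dependsOn_empty (hw1 : ∀ i, ∑ b, w i b = 1) {k : ℕ} (hk : 0 < k)
    {κ : Type*} (A : Finset κ) (g : κ → (ι → Bool) → ℝ) (hg0 : ∀ a ∈ A, ∀ ω, 0 ≤ g a ω)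
    (hg : ∀ a ∈ A, DependsOn (g a) ∅) :
    expectation w (fun ω => ∏ a ∈ A, g a ω) =
      ∏ a ∈ A, expectation w (fun ω => g a ω ^ k) ^ (k⁻¹ : ℝ) := by
  have hconst : ∀ a ∈ A, ∀ ω, g a ω = g a fun _ => true := fun a ha ω => (hg a ha).empty _ _
  calc expectation w (fun ω => ∏ a ∈ A, g a ω)
      = expectation w (fun _ => ∏ a ∈ A, g a fun _ => true) :=
        congrArg _ (funext fun ω => prod_congr rfl fun a ha => hconst a ha ω)
    _ = ∏ a ∈ A, g a fun _ => true := expectation_const hw1 _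
    _ = ∏ a ∈ A, expectation w (fun ω => g a ω ^ k) ^ (k⁻¹ : ℝ) :=
        prod_congr rfl fun a ha => by
          simp only [hconst a ha, expectation_const hw1,
            Real.pow_rpow_inv_natCast (hg0 a ha _) hk.ne']

lemma expectation_prod_le_of_dependsOn_inter (hw0 : ∀ i b, 0 ≤ w i b)
    (hw1 : ∀ i, ∑ b, w i b = 1) {k : ℕ} (hk : 0 < k) {κ : Type*} (A : Finset κ)
    (S : κ → Finset ι) (hmult : ∀ i, #{a ∈ A | i ∈ S a} ≤ k) (T : Finset ι)
    (g : κ → (ι → Bool) → ℝ) (hg0 : ∀ a ∈ A, ∀ ω, 0 ≤ g a ω)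
    (hgS : ∀ a ∈ A, DependsOn (g a) ↑(S a ∩ T)) :
    expectation w (fun ω => ∏ a ∈ A, g a ω) ≤
      ∏ a ∈ A, expectation w (fun ω => g a ω ^ k) ^ (k⁻¹ : ℝ) := by
  induction T using Finset.induction_on generalizing g with
  | empty =>
    exact (expectation_prod_eq_of_dependsOn_empty hw1 hk A g hg0 fun a ha => by
      simpa using hgS a ha).le
  | insert e T _ ih =>
    set g' : κ → (ι → Bool) → ℝ :=
      fun a ω => if e ∈ S a then coordNorm w k e (g a) ω else g a ω
    have hg'0 : ∀ a ∈ A, ∀ ω, 0 ≤ g' a ω := fun a ha ω => by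
      by_cases hea : e ∈ S a
      · simpa [g', hea] using coordNorm_nonneg hw0 e (hg0 a ha) ω
      · simpa [g', hea] using hg0 a ha ω
    have hg'S : ∀ a ∈ A, DependsOn (g' a) ↑(S a ∩ T) := fun a ha => by
      by_cases hea : e ∈ S a
      · have hcoord := (hgS a ha).coordNorm (w := w) k e
        rw [inter_insert_of_mem hea, coe_insert] at hcoord
        simpa [g', hea] using hcoord.mono (Set.sdiff_singleton_subset_iff.2 subset_rfl)
      · simpa [g', hea, inter_insert_of_notMem hea] using hgS a ha
    calc expectation w (fun ω => ∏ a ∈ A, g a ω)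
        = expectation w (fun ω => ∑ b, w e b * ∏ a ∈ A, g a (update ω e b)) :=
          expectation_eq_expectation_sum_update hw1 e _
      _ ≤ expectation w (fun ω => ∏ a ∈ A, g' a ω) :=
          expectation_mono hw0 <| sum_mul_prod_update_le_prod_coordNorm hw0 hw1 hk A S g hg0
            (fun a ha => (hgS a ha).mono (by simp)) e (hmult e)
      _ ≤ ∏ a ∈ A, expectation w (fun ω => g' a ω ^ k) ^ (k⁻¹ : ℝ) := ih g' hg'0 hg'S
      _ = ∏ a ∈ A, expectation w (fun ω => g a ω ^ k) ^ (k⁻¹ : ℝ) := by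
          refine prod_congr rfl fun a ha => ?_
          by_cases hea : e ∈ S a
          · simp only [g', hea, if_true, expectation_coordNorm_pow hw0 hw1 hk e (hg0 a ha)]
          · simp only [g', hea, if_false]

/-- **Finner's inequality** on the discrete cube. -/
theorem expectation_prod_le_prod_expectation_pow_rpow (hw0 : ∀ i b, 0 ≤ w i b)
    (hw1 : ∀ i, ∑ b, w i b = 1) {k : ℕ} (hk : 0 < k) {κ : Type*} (A : Finset κ)
    (S : κ → Finset ι) (g : κ → (ι → Bool) → ℝ) (hg0 : ∀ a ∈ A, ∀ ω, 0 ≤ g a ω)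
    (hgS : ∀ a ∈ A, DependsOn (g a) (S a)) (hmult : ∀ i, #{a ∈ A | i ∈ S a} ≤ k) :
    expectation w (fun ω => ∏ a ∈ A, g a ω) ≤
      ∏ a ∈ A, expectation w (fun ω => g a ω ^ k) ^ (k⁻¹ : ℝ) :=
  expectation_prod_le_of_dependsOn_inter hw0 hw1 hk A S hmult univ g hg0 (by simpa using hgS)

lemma expectation_comp_of_eq_zero_or_eq_one (hw1 : ∀ i, ∑ b, w i b = 1) {X : (ι → Bool) → ℝ}
    (hX : ∀ ω, X ω = 0 ∨ X ω = 1) (φ : ℝ → ℝ) :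
    expectation w (fun ω => φ (X ω)) = (1 - expectation w X) * φ 0 + expectation w X * φ 1 := by
  have hφ : ∀ ω, φ (X ω) = φ 0 + (φ 1 - φ 0) * X ω := fun ω => by
    rcases hX ω with h | h <;> simp [h]
  simp only [hφ, expectation_add, expectation_const hw1, expectation_const_mul]
  ring

lemma expectation_indicator_le_two_mul_exp (hw0 : ∀ i b, 0 ≤ w i b) {Y : (ι → Bool) → ℝ}
    {m c t : ℝ} (hc : 0 < c) (ht : 0 ≤ t)
    (hmgf : ∀ s, expectation w (fun ω => Real.exp (s * (Y ω - m))) ≤ Real.exp (c * s ^ 2 / 2)) :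
    expectation w (fun ω => if t ≤ |Y ω - m| then 1 else 0) ≤ 2 * Real.exp (-t ^ 2 / (2 * c)) := by
  -- `s = t / c` minimises `-s * t + c * s ^ 2 / 2`
  set s := t / c with hs
  have hshift : ∀ σ : ℝ, (fun ω => Real.exp (s * (σ * (Y ω - m) - t))) =
      fun ω => Real.exp (-(s * t)) * Real.exp ((s * σ) * (Y ω - m)) := fun σ => by
    funext ω; rw [← Real.exp_add]; ring_nf
  calc expectation w (fun ω => if t ≤ |Y ω - m| then 1 else 0)
      ≤ expectation w (fun ω => Real.exp (s * (1 * (Y ω - m) - t)) +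
          Real.exp (s * ((-1) * (Y ω - m) - t))) :=
        expectation_mono hw0 fun ω => by
          simpa using indicator_le_exp_add_exp (d := Y ω - m) (t := t) (div_nonneg ht hc.le)
    _ ≤ Real.exp (-(s * t)) * Real.exp (c * s ^ 2 / 2) +
          Real.exp (-(s * t)) * Real.exp (c * (-s) ^ 2 / 2) := by
        rw [expectation_add, hshift, hshift, expectation_const_mul, expectation_const_mul]
        gcongr
        · simpa using hmgf s
        · simpa using hmgf (-s)
    _ = 2 * Real.exp (-t ^ 2 / (2 * c)) := by
        simp only [← Real.exp_add, neg_sq, ← two_mul]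
        congr 2
        rw [hs]
        field_simp
        ring

def bernoulliWeight (p : ℝ) (b : Bool) : ℝ := if b then p else 1 - p

lemma bernoulliWeight_nonneg {p : ℝ} (hp0 : 0 ≤ p) (hp1 : p ≤ 1) (b : Bool) :
    0 ≤ bernoulliWeight p b := by
  cases b <;> simp [bernoulliWeight, hp0, hp1]

lemma sum_bernoulliWeight (p : ℝ) : ∑ b, bernoulliWeight p b = 1 := by
  simp [bernoulliWeight]

end BoolCube

namespace FourProfileSparsifier

variable {V : Type*} [Fintype V] [DecidableEq V]

open BoolCube

section Cliques

variable (G : SimpleGraph V) [DecidableRel G.Adj]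

def cliqueEdges (Q : Finset V) : Finset G.edgeFinset := {e | (e : Sym2 V) ∈ Q.sym2}

lemma mk_mem_cliqueEdges {Q : Finset V} {a b : V} (h : s(a, b) ∈ G.edgeFinset) :
    ⟨s(a, b), h⟩ ∈ cliqueEdges G Q ↔ a ∈ Q ∧ b ∈ Q := by
  simp [cliqueEdges]

lemma map_subtype_cliqueEdges {Q : Finset V} (hQ : G.IsClique (Q : Set V)) :
    (cliqueEdges G Q).map (.subtype _) = Q.offDiag.image Sym2.mk.uncurry := by
  ext z
  induction z using Sym2.ind with
  | _ a b =>
    simp only [cliqueEdges, mem_sym2_iff, univ_eq_attach, mem_map, mem_filter, mem_attach,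
      true_and, Embedding.subtype_apply, Subtype.exists, SimpleGraph.mem_edgeFinset,
      exists_and_left, exists_prop, exists_eq_right_right, Sym2.mem_iff, forall_eq_or_imp,
      forall_eq, SimpleGraph.mem_edgeSet, mem_image, mem_offDiag, ne_eq, Prod.exists,
      uncurry_apply_pair, Sym2.eq, Sym2.rel_iff', Prod.mk.injEq, Prod.swap_prod_mk]
    constructor
    · rintro ⟨⟨ha, hb⟩, hadj⟩
      exact ⟨a, b, ⟨ha, hb, hadj.ne⟩, .inl ⟨rfl, rfl⟩⟩
    · rintro ⟨a', b', ⟨ha, hb, hne⟩, ⟨rfl, rfl⟩ | ⟨rfl, rfl⟩⟩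
      · exact ⟨⟨ha, hb⟩, hQ ha hb hne⟩
      · exact ⟨⟨hb, ha⟩, hQ hb ha (Ne.symm hne)⟩

lemma card_cliqueEdges {Q : Finset V} (hQ : G.IsClique (Q : Set V)) :
    #(cliqueEdges G Q) = (#Q).choose 2 := by
  rw [← card_map, map_subtype_cliqueEdges G hQ, Sym2.card_image_offDiag]

lemma isClique_keep_iff {Q : Finset V} (hQ : G.IsClique (Q : Set V)) (ω : G.edgeFinset → Bool) :
    (keep G ω).IsClique (Q : Set V) ↔ ∀ e ∈ cliqueEdges G Q, ω e = true := by
  constructor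
  · rintro h ⟨e, he⟩ heQ
    induction e using Sym2.ind with
    | _ a b =>
      obtain ⟨ha, hb⟩ := (mk_mem_cliqueEdges G he).1 heQ
      exact (h ha hb (SimpleGraph.mem_edgeFinset.1 he).ne).2
  · intro h a ha b hb hab
    exact ⟨hQ ha hb hab, h _ ((mk_mem_cliqueEdges G _).2 ⟨ha, hb⟩)⟩

def cliqueIndicator (Q : Finset V) (ω : G.edgeFinset → Bool) : ℝ :=
  ∏ e ∈ cliqueEdges G Q, if ω e then 1 else 0

lemma cliqueIndicator_eq_ite (Q : Finset V) (ω : G.edgeFinset → Bool) :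
    cliqueIndicator G Q ω = if ∀ e ∈ cliqueEdges G Q, ω e = true then 1 else 0 := by
  rw [cliqueIndicator, prod_boole]
  congr

lemma cliqueIndicator_eq_zero_or_eq_one (Q : Finset V) (ω : G.edgeFinset → Bool) :
    cliqueIndicator G Q ω = 0 ∨ cliqueIndicator G Q ω = 1 := by
  rw [cliqueIndicator_eq_ite]
  split_ifs <;> simp

lemma dependsOn_cliqueIndicator (Q : Finset V) :
    DependsOn (cliqueIndicator G Q) (cliqueEdges G Q) :=
  fun _ _ h => prod_congr rfl fun e he => by rw [h e he]

lemma Y10_eq_sum_cliqueIndicator (ω : G.edgeFinset → Bool) :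
    (Y10 G ω : ℝ) = ∑ Q ∈ G.cliqueFinset 4, cliqueIndicator G Q ω := by
  have hkept : (keep G ω).cliqueFinset 4 =
      {Q ∈ G.cliqueFinset 4 | ∀ e ∈ cliqueEdges G Q, ω e} := by
    ext Q
    simp only [mem_filter, SimpleGraph.mem_cliqueFinset_iff, SimpleGraph.isNClique_iff]
    constructor
    · rintro ⟨hclique, hcard⟩
      have hQ : G.IsClique (Q : Set V) := hclique.mono fun a b (h : (keep G ω).Adj a b) => h.1
      exact ⟨⟨hQ, hcard⟩, (isClique_keep_iff G hQ ω).1 hclique⟩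
    · rintro ⟨⟨hQ, hcard⟩, h⟩
      exact ⟨(isClique_keep_iff G hQ ω).2 h, hcard⟩
  simp only [cliqueIndicator_eq_ite, sum_boole, Y10, hkept]

lemma card_filter_mem_cliqueEdges_le_k10 (e : G.edgeFinset) :
    #{Q ∈ G.cliqueFinset 4 | e ∈ cliqueEdges G Q} ≤ k10 G := by
  obtain ⟨z, hz⟩ := e
  induction z using Sym2.ind with
  | _ a b =>
    have hadj : G.Adj a b := SimpleGraph.mem_edgeFinset.1 hz
    simp only [mk_mem_cliqueEdges]
    exact le_of_eq_of_le (if_pos hadj).symm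
      (le_sup (f := fun x : V × V => if G.Adj x.1 x.2 then
        #{Q ∈ G.cliqueFinset 4 | x.1 ∈ Q ∧ x.2 ∈ Q} else 0) (mem_univ (a, b)))

lemma k10_pos (hN : 1 ≤ N10 G) : 0 < k10 G := by
  obtain ⟨Q, hQ⟩ := card_pos.1 hN
  have hQ' := SimpleGraph.mem_cliqueFinset_iff.1 hQ
  obtain ⟨a, ha, b, hb, hab⟩ := one_lt_card.1 (by rw [hQ'.card_eq]; norm_num)
  have hadj : G.Adj a b := hQ'.isClique ha hb hab
  have hmem : ⟨s(a, b), SimpleGraph.mem_edgeFinset.2 hadj⟩ ∈ cliqueEdges G Q :=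
    (mk_mem_cliqueEdges G _).2 ⟨ha, hb⟩
  exact (card_pos.2 ⟨Q, mem_filter.2 ⟨hQ, hmem⟩⟩).trans_le
    (card_filter_mem_cliqueEdges_le_k10 G _)

lemma expectation_cliqueIndicator (p : ℝ) {Q : Finset V} (hQ : Q ∈ G.cliqueFinset 4) :
    expectation (fun _ => bernoulliWeight p) (cliqueIndicator G Q) = p ^ 6 := by
  have hQ' := SimpleGraph.mem_cliqueFinset_iff.1 hQ
  unfold cliqueIndicator
  rw [expectation_prod (fun _ => sum_bernoulliWeight p) _ fun _ b => if b then 1 else 0]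
  simp [bernoulliWeight, card_cliqueEdges G hQ'.isClique, hQ'.card_eq, Nat.choose_two_right]

lemma expectation_exp_mul_cliqueIndicator_sub_le {p : ℝ} (hp0 : 0 ≤ p) (hp1 : p ≤ 1)
    {Q : Finset V} (hQ : Q ∈ G.cliqueFinset 4) (t : ℝ) :
    expectation (fun _ => bernoulliWeight p)
      (fun ω => Real.exp (t * (cliqueIndicator G Q ω - p ^ 6))) ≤ Real.exp (t ^ 2 / 8) := by
  rw [expectation_comp_of_eq_zero_or_eq_one (fun _ => sum_bernoulliWeight p)
    (cliqueIndicator_eq_zero_or_eq_one G Q) fun x => Real.exp (t * (x - p ^ 6)),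
    expectation_cliqueIndicator G p hQ]
  simpa using bernoulli_centered_mgf_le (by positivity) (pow_le_one₀ hp0 hp1) t

lemma expectation_exp_mul_cliqueIndicator_sub_pow_rpow_le {p : ℝ} (hp0 : 0 ≤ p) (hp1 : p ≤ 1)
    {Q : Finset V} (hQ : Q ∈ G.cliqueFinset 4) {k : ℕ} (hk : 0 < k) (s : ℝ) :
    expectation (fun _ => bernoulliWeight p)
        (fun ω => Real.exp (s * (cliqueIndicator G Q ω - p ^ 6)) ^ k) ^ (k⁻¹ : ℝ) ≤
      Real.exp (k * s ^ 2 / 8) := by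
  calc expectation (fun _ => bernoulliWeight p)
          (fun ω => Real.exp (s * (cliqueIndicator G Q ω - p ^ 6)) ^ k) ^ (k⁻¹ : ℝ)
      = expectation (fun _ => bernoulliWeight p)
          (fun ω => Real.exp ((k * s) * (cliqueIndicator G Q ω - p ^ 6))) ^ (k⁻¹ : ℝ) := by
        simp only [← Real.exp_nat_mul, mul_assoc]
    _ ≤ Real.exp ((k * s) ^ 2 / 8) ^ (k⁻¹ : ℝ) :=
        Real.rpow_le_rpow
          (expectation_nonneg (fun _ => bernoulliWeight_nonneg hp0 hp1) fun _ => by positivity)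
          (expectation_exp_mul_cliqueIndicator_sub_le G hp0 hp1 hQ _) (by positivity)
    _ = Real.exp (k * s ^ 2 / 8) := by
        rw [← Real.exp_mul]
        congr 1
        field_simp

lemma expectation_exp_mul_Y10_sub_le {p : ℝ} (hp0 : 0 ≤ p) (hp1 : p ≤ 1) (hN : 1 ≤ N10 G)
    (s : ℝ) :
    expectation (fun _ => bernoulliWeight p) (fun ω => Real.exp (s * (Y10 G ω - p ^ 6 * N10 G))) ≤
      Real.exp ((k10 G * N10 G / 4 : ℝ) * s ^ 2 / 2) := by
  have hw0 : ∀ (_ : G.edgeFinset) b, 0 ≤ bernoulliWeight p b :=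
    fun _ => bernoulliWeight_nonneg hp0 hp1
  have hk := k10_pos G hN
  have hexp_sum : ∀ ω, Real.exp (s * (Y10 G ω - p ^ 6 * N10 G)) =
      ∏ Q ∈ G.cliqueFinset 4, Real.exp (s * (cliqueIndicator G Q ω - p ^ 6)) := fun ω => by
    rw [← Real.exp_sum, ← mul_sum, sum_sub_distrib, sum_const, nsmul_eq_mul,
      Y10_eq_sum_cliqueIndicator, N10, mul_comm (p ^ 6)]
  calc expectation (fun _ => bernoulliWeight p)
        (fun ω => Real.exp (s * (Y10 G ω - p ^ 6 * N10 G)))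
      = expectation (fun _ => bernoulliWeight p) (fun ω => ∏ Q ∈ G.cliqueFinset 4,
          Real.exp (s * (cliqueIndicator G Q ω - p ^ 6))) := by simp only [hexp_sum]
    _ ≤ ∏ Q ∈ G.cliqueFinset 4, expectation (fun _ => bernoulliWeight p) (fun ω =>
          Real.exp (s * (cliqueIndicator G Q ω - p ^ 6)) ^ k10 G) ^ ((k10 G : ℝ)⁻¹) :=
        expectation_prod_le_prod_expectation_pow_rpow hw0 (fun _ => sum_bernoulliWeight p) hk _
          (cliqueEdges G) _ (fun _ _ _ => by positivity)
          (fun Q _ _ _ h => by rw [dependsOn_cliqueIndicator G Q h])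
          (card_filter_mem_cliqueEdges_le_k10 G)
    _ ≤ ∏ Q ∈ G.cliqueFinset 4, Real.exp (k10 G * s ^ 2 / 8) :=
        prod_le_prod (fun _ _ => Real.rpow_nonneg (expectation_nonneg hw0 fun _ => by positivity) _)
          fun Q hQ => expectation_exp_mul_cliqueIndicator_sub_pow_rpow_le G hp0 hp1 hQ hk s
    _ = Real.exp ((k10 G * N10 G / 4 : ℝ) * s ^ 2 / 2) := by
        rw [prod_const, ← Real.exp_nat_mul, N10]
        ring_nf

lemma prob_eq_expectation (p : ℝ) (A : (G.edgeFinset → Bool) → Prop) [DecidablePred A] :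
    prob G p A = expectation (fun _ => bernoulliWeight p) fun ω => if A ω then 1 else 0 := by
  unfold prob expectation bernoulliWeight
  refine sum_congr rfl fun ω _ => ?_
  by_cases h : A ω <;> simp [h]

end Cliques

theorem statement1 (G : SimpleGraph V) [DecidableRel G.Adj]
    (p ε : ℝ) (hp0 : 0 < p) (hp1 : p ≤ 1) (hε : 0 < ε)
    (hN : 1 ≤ N10 G) :
    prob G p (fun ω => ε * (N10 G : ℝ) ≤ |(Y10 G ω : ℝ) - p ^ 6 * (N10 G : ℝ)|) ≤
      2 * Real.exp (-2 * ε ^ 2 * (N10 G : ℝ) / (k10 G : ℝ)) := by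
  have hk : (0 : ℝ) < k10 G := by exact_mod_cast k10_pos G hN
  have hN' : (0 : ℝ) < N10 G := by exact_mod_cast hN
  calc prob G p (fun ω => ε * (N10 G : ℝ) ≤ |(Y10 G ω : ℝ) - p ^ 6 * (N10 G : ℝ)|)
      = expectation (fun _ => bernoulliWeight p)
          (fun ω => if ε * N10 G ≤ |(Y10 G ω : ℝ) - p ^ 6 * N10 G| then 1 else 0) :=
        prob_eq_expectation G p _
    _ ≤ 2 * Real.exp (-(ε * N10 G) ^ 2 / (2 * (k10 G * N10 G / 4))) :=
        expectation_indicator_le_two_mul_exp (fun _ => bernoulliWeight_nonneg hp0.le hp1)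
          (by positivity) (by positivity) (expectation_exp_mul_Y10_sub_le G hp0.le hp1 hN)
    _ = 2 * Real.exp (-2 * ε ^ 2 * (N10 G : ℝ) / (k10 G : ℝ)) := by
        congr 2
        field_simp
        ring

end FourProfileSparsifier
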